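/- For every function Q : Δ(S) × A → ℝ and every a ∈ A, the map b ↦ H_OTIB Q(b,a) is convex on Δ(S): for all beliefs b₁, b₂ and λ ∈ [0,1], H_OTIB Q(λb₁+(1−λ)b₂, a) ≤ λ·H_OTIB Q(b₁,a) + (1−λ)·H_OTIB Q(b₂,a). Consequently, any fixed point Q of H_OTIB (Q = H_OTIB Q) is convex in the belief. -/

import Mathlib

/-!
Multiplied by `Pr(o|b,a)`, the infimum over `W_{b,a,o}` becomes the least cost of writing the
unnormalised vector `Pr(·,o|b,a)` as a nonnegative combination of the beliefs of `B_SAO`, the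
cost of `b'` being `Q(b',a')`. This is the value of a parametric linear program, hence convex in the
right-hand side (weights of two vectors add up to weights of their sum), and the right-hand side is
linear in `b`. Maxima over `a'`, sums over `o` and the linear reward term keep convexity. When
`Pr(o|b,a) = 0` the vector is `0`, whose only representation is the zero one because beliefs have
total mass one, so this also matches the branch `0` of `H_OTIB`.
-/

open Finset
open scoped Classical

set_option linter.unusedSectionVars false

/-- A belief (probability distribution) over a finite state space `S`. -/
structure Belief (S : Type*) [Fintype S] where
  val : S → ℝ
  nonneg : ∀ s, 0 ≤ val s
  sum_one : ∑ s, val s = 1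

/-- The convex combination `l • b₁ + (1-l) • b₂` of two beliefs. -/
noncomputable def Belief.mix {S : Type*} [Fintype S] (b₁ b₂ : Belief S) (l : ℝ)
    (h0 : 0 ≤ l) (h1 : l ≤ 1) : Belief S where
  val s := l * b₁.val s + (1 - l) * b₂.val s
  nonneg s := add_nonneg (mul_nonneg h0 (b₁.nonneg s))
    (mul_nonneg (by linarith) (b₂.nonneg s))
  sum_one := by
    rw [Finset.sum_add_distrib, ← Finset.mul_sum, ← Finset.mul_sum, b₁.sum_one, b₂.sum_one]
    ring

/-- `Q : Δ(S) × A → ℝ` is convex in the belief. -/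
def ConvexInBelief {S A : Type*} [Fintype S] (Q : Belief S → A → ℝ) : Prop :=
  ∀ (a : A) (b₁ b₂ : Belief S) (l : ℝ) (h0 : 0 ≤ l) (h1 : l ≤ 1),
    Q (Belief.mix b₁ b₂ l h0 h1) a ≤ l * Q b₁ a + (1 - l) * Q b₂ a

/-- A finite POMDP: transition function `T s a s' = T(s'|s,a)`, observation function
`Z a s' o = Ω(o|a,s')`, rewards `R`, discount `γ ∈ (0,1)`. -/
structure POMDP (S A O : Type*) [Fintype S] [Fintype A] [Fintype O] where
  T : S → A → S → ℝ
  T_nonneg : ∀ s a s', 0 ≤ T s a s'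
  T_sum_one : ∀ s a, ∑ s', T s a s' = 1
  Z : A → S → O → ℝ
  Z_nonneg : ∀ a s' o, 0 ≤ Z a s' o
  Z_sum_one : ∀ a s', ∑ o, Z a s' o = 1
  R : S → A → ℝ
  γ : ℝ
  γ_pos : 0 < γ
  γ_lt_one : γ < 1

namespace POMDP

variable {S A O : Type*} [Fintype S] [Fintype A] [Fintype O] [Nonempty S] [Nonempty A]
  [Nonempty O]
variable (M : POMDP S A O)

/-- `Pr(s',o|s,a)` -/
def prSO (s : S) (a : A) (s' : S) (o : O) : ℝ := M.Z a s' o * M.T s a s'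

lemma prSO_nonneg (s : S) (a : A) (s' : S) (o : O) : 0 ≤ M.prSO s a s' o :=
  mul_nonneg (M.Z_nonneg a s' o) (M.T_nonneg s a s')

/-- `Pr(o|s,a)` -/
def prO (s : S) (a : A) (o : O) : ℝ := ∑ s', M.prSO s a s' o

/-- `Pr(s',o|b,a)` -/
def bprSO (b : Belief S) (a : A) (s' : S) (o : O) : ℝ := ∑ s, b.val s * M.prSO s a s' o

lemma bprSO_nonneg (b : Belief S) (a : A) (s' : S) (o : O) : 0 ≤ M.bprSO b a s' o :=
  Finset.sum_nonneg fun s _ => mul_nonneg (b.nonneg s) (M.prSO_nonneg s a s' o)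

/-- `Pr(o|b,a)` -/
def bprO (b : Belief S) (a : A) (o : O) : ℝ := ∑ s', M.bprSO b a s' o

/-- The unit belief `δ_s`. -/
noncomputable def unit (s : S) : Belief S where
  val s' := if s' = s then 1 else 0
  nonneg s' := by by_cases h : s' = s <;> simp [h]
  sum_one := by simp

/-- The posterior belief `b_{b,a,o}`, defined when `Pr(o|b,a) > 0`. -/
noncomputable def post (b : Belief S) (a : A) (o : O) (h : 0 < M.bprO b a o) : Belief S where
  val s' := M.bprSO b a s' o / M.bprO b a o
  nonneg s' := div_nonneg (M.bprSO_nonneg b a s' o) h.le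
  sum_one := by
    rw [← Finset.sum_div]
    exact div_self (ne_of_gt h)

/-- The one-step belief `b_{s,a,o} = b_{δ_s,a,o}`, defined when `Pr(o|s,a) > 0`. -/
noncomputable def osb (s : S) (a : A) (o : O) (h : 0 < M.prO s a o) : Belief S where
  val s' := M.prSO s a s' o / M.prO s a o
  nonneg s' := div_nonneg (M.prSO_nonneg s a s' o) h.le
  sum_one := by
    unfold prO
    rw [← Finset.sum_div]
    exact div_self (ne_of_gt h)

/-- Expected reward `R(b,a)`. -/
noncomputable def expR (b : Belief S) (a : A) : ℝ := ∑ s, b.val s * M.R s a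

/-- The fast informed bound operator `H_FIB`. -/
noncomputable def HFIB (Q : Belief S → A → ℝ) (b : Belief S) (a : A) : ℝ :=
  M.expR b a + M.γ * ∑ o, Finset.univ.sup' Finset.univ_nonempty
    (fun a' => ∑ s', M.bprSO b a s' o * Q (unit s') a')

/-- The tighter informed bound operator `H_TIB`. -/
noncomputable def HTIB (Q : Belief S → A → ℝ) (b : Belief S) (a : A) : ℝ :=
  M.expR b a + M.γ * ∑ o, Finset.univ.sup' Finset.univ_nonempty
    (fun a' => ∑ s, if h : 0 < M.prO s a o then
      b.val s * M.prO s a o * Q (M.osb s a o h) a' else 0)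

/-- The optimal Bellman operator `H_POMDP`. -/
noncomputable def HPOMDP (Q : Belief S → A → ℝ) (b : Belief S) (a : A) : ℝ :=
  M.expR b a + M.γ * ∑ o, if h : 0 < M.bprO b a o then
    M.bprO b a o * Finset.univ.sup' Finset.univ_nonempty (fun a' => Q (M.post b a o h) a')
  else 0

/-- Index type for the family `B_SAO`: `none` indexes the initial belief `b₀`,
`some (s,a,o)` (with `Pr(o|s,a) > 0`) indexes the one-step belief `b_{s,a,o}`. -/
abbrev OSIdx : Type _ := Option {x : S × A × O // 0 < M.prO x.1 x.2.1 x.2.2}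

/-- The member of the family `B_SAO` (with initial belief `b₀`) at a given index. -/
noncomputable def member (b₀ : Belief S) : M.OSIdx → Belief S
  | none => b₀
  | some x => M.osb x.1.1 x.1.2.1 x.1.2.2 x.2

/-- `w` is a weight function for the belief `tgt` over the family `B_SAO`. -/
def IsWeight (b₀ : Belief S) (tgt : Belief S) (w : M.OSIdx → ℝ) : Prop :=
  (∀ i, 0 ≤ w i) ∧ ∀ s, ∑ i, w i * (M.member b₀ i).val s = tgt.val s

/-- The optimized tighter informed bound operator `H_OTIB`. -/
noncomputable def HOTIB (b₀ : Belief S) (Q : Belief S → A → ℝ) (b : Belief S) (a : A) : ℝ :=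
  M.expR b a + M.γ * ∑ o, if h : 0 < M.bprO b a o then
    Finset.univ.sup' Finset.univ_nonempty (fun a' =>
      M.bprO b a o * ⨅ w : {w : M.OSIdx → ℝ // M.IsWeight b₀ (M.post b a o h) w},
        ∑ i, (w : M.OSIdx → ℝ) i * Q (M.member b₀ i) a')
  else 0

/-- The operator `H_ŵ` induced by a weight selection `W`. -/
noncomputable def Hsel (b₀ : Belief S)
    (W : ∀ (b : Belief S) (a : A) (o : O), 0 < M.bprO b a o → (M.OSIdx → ℝ))
    (Q : Belief S → A → ℝ) (b : Belief S) (a : A) : ℝ :=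
  M.expR b a + M.γ * ∑ o, if h : 0 < M.bprO b a o then
    Finset.univ.sup' Finset.univ_nonempty (fun a' =>
      M.bprO b a o * ∑ i, W b a o h i * Q (M.member b₀ i) a')
  else 0

end POMDP

theorem ConvexOn.finset_sup' {𝕜 E β κ : Type*} [Semiring 𝕜] [PartialOrder 𝕜]
    [AddCommMonoid E] [SMul 𝕜 E] [AddCommMonoid β] [LinearOrder β] [IsOrderedAddMonoid β]
    [Module 𝕜 β] [PosSMulStrictMono 𝕜 β] {s : Set E} {t : Finset κ} (ht : t.Nonempty)
    {f : κ → E → β} (hf : ∀ k ∈ t, ConvexOn 𝕜 s (f k)) :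
    ConvexOn 𝕜 s fun x => t.sup' ht fun k => f k x := by
  refine ⟨(hf _ ht.choose_spec).1, fun x hx y hy a b ha hb hab => Finset.sup'_le _ _ fun k hk => ?_⟩
  calc f k (a • x + b • y) ≤ a • f k x + b • f k y := (hf k hk).2 hx hy ha hb hab
    _ ≤ a • t.sup' ht (f · x) + b • t.sup' ht (f · y) := by
      gcongr <;> exact Finset.le_sup' (f · _) hk

section WeightCone

variable {ι E : Type*} [Fintype ι] [AddCommGroup E] [Module ℝ E]

def weightCone (m : ι → E) (x : E) : Set (ι → ℝ) :=
  {w | 0 ≤ w ∧ ∑ i, w i • m i = x}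

noncomputable def minCost (m : ι → E) (q : ι → ℝ) (x : E) : ℝ :=
  ⨅ w : weightCone m x, ∑ i, (w : ι → ℝ) i * q i

variable {m : ι → E} {q : ι → ℝ} {x y : E} {w v : ι → ℝ}

lemma add_mem_weightCone (hw : w ∈ weightCone m x) (hv : v ∈ weightCone m y) :
    w + v ∈ weightCone m (x + y) :=
  ⟨add_nonneg hw.1 hv.1, by simp only [Pi.add_apply, add_smul, Finset.sum_add_distrib, hw.2, hv.2]⟩

lemma smul_mem_weightCone {c : ℝ} (hc : 0 ≤ c) (hw : w ∈ weightCone m x) :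
    c • w ∈ weightCone m (c • x) :=
  ⟨smul_nonneg hc hw.1, by
    simp only [Pi.smul_apply, smul_eq_mul, mul_smul, ← Finset.smul_sum, hw.2]⟩

lemma inv_smul_mem_weightCone_iff {c : ℝ} (hc : 0 < c) :
    w ∈ weightCone m (c⁻¹ • x) ↔ c • w ∈ weightCone m x := by
  refine ⟨fun hw => ?_, fun hw => ?_⟩
  · simpa [smul_smul, hc.ne'] using smul_mem_weightCone hc.le hw
  · simpa [smul_smul, hc.ne'] using smul_mem_weightCone (inv_nonneg.2 hc.le) hw

lemma convex_weightCone_nonempty : Convex ℝ {x : E | (weightCone m x).Nonempty} := by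
  rintro x ⟨w, hw⟩ y ⟨v, hv⟩ a b ha hb -
  exact ⟨_, add_mem_weightCone (smul_mem_weightCone ha hw) (smul_mem_weightCone hb hv)⟩

lemma mul_minCost_inv_smul {c : ℝ} (hc : 0 < c) :
    c * minCost m q (c⁻¹ • x) = minCost m q x := by
  rw [minCost, Real.mul_iInf_of_nonneg hc.le]
  refine Equiv.iInf_congr
    ((LinearEquiv.smulOfNeZero ℝ (ι → ℝ) c hc.ne').toEquiv.subtypeEquiv
      fun _ => inv_smul_mem_weightCone_iff hc) fun w => ?_
  rw [Finset.mul_sum]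
  exact Finset.sum_congr rfl fun i _ => mul_assoc _ _ _

section Normalized

variable (L : E →ₗ[ℝ] ℝ) (hL : ∀ i, L (m i) = 1)
include hL

lemma sum_eq_of_mem_weightCone (hw : w ∈ weightCone m x) : ∑ i, w i = L x := by
  simp [← hw.2, hL]

lemma weightCone_zero : weightCone m 0 = {0} := by
  refine Set.eq_singleton_iff_unique_mem.2 ⟨⟨le_rfl, by simp⟩, fun w hw => ?_⟩
  have hsum : ∑ i, w i = 0 := by rw [sum_eq_of_mem_weightCone L hL hw, map_zero]
  exact funext fun i =>
    (Finset.sum_eq_zero_iff_of_nonneg fun j _ => hw.1 j).1 hsum i (Finset.mem_univ i)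

lemma minCost_zero : minCost m q 0 = 0 := by
  rw [minCost, weightCone_zero L hL]
  simp

lemma bddBelow_cost :
    BddBelow (Set.range fun w : weightCone m x => ∑ i, (w : ι → ℝ) i * q i) := by
  refine ⟨L x * ⨅ i, q i, ?_⟩
  rintro _ ⟨⟨w, hw⟩, rfl⟩
  rw [← sum_eq_of_mem_weightCone L hL hw, Finset.sum_mul]
  exact Finset.sum_le_sum fun i _ =>
    mul_le_mul_of_nonneg_left (ciInf_le (Finite.bddBelow_range q) i) (hw.1 i)

lemma convexOn_minCost : ConvexOn ℝ {x : E | (weightCone m x).Nonempty} (minCost m q) := by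
  refine ⟨convex_weightCone_nonempty, fun x hx y hy a b ha hb _ => ?_⟩
  have : Nonempty (weightCone m x) := hx.to_subtype
  have : Nonempty (weightCone m y) := hy.to_subtype
  have hcomb : ∀ (w : weightCone m x) (v : weightCone m y), minCost m q (a • x + b • y) ≤
      a * ∑ i, (w : ι → ℝ) i * q i + b * ∑ i, (v : ι → ℝ) i * q i := fun w v => by
    have hmem := add_mem_weightCone (smul_mem_weightCone ha w.2) (smul_mem_weightCone hb v.2)
    refine (ciInf_le (bddBelow_cost (q := q) L hL) ⟨_, hmem⟩).trans_eq ?_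
    simp [add_mul, Finset.sum_add_distrib, Finset.mul_sum, mul_assoc]
  have hx' : ∀ v : weightCone m y, minCost m q (a • x + b • y) -
      b * ∑ i, (v : ι → ℝ) i * q i ≤ a * minCost m q x := fun v => by
    rw [show a * minCost m q x = _ from Real.mul_iInf_of_nonneg ha _]
    exact le_ciInf fun w => by linarith [hcomb w v]
  have hy' : minCost m q (a • x + b • y) - a * minCost m q x ≤ b * minCost m q y := by
    rw [show b * minCost m q y = _ from Real.mul_iInf_of_nonneg hb _]
    exact le_ciInf fun v => by linarith [hx' v]
  simp only [smul_eq_mul]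
  linarith

end Normalized

end WeightCone

lemma Belief.sum_proj_val {S : Type*} [Fintype S] (b : Belief S) :
    (∑ s, LinearMap.proj s : (S → ℝ) →ₗ[ℝ] ℝ) b.val = 1 := by
  simpa using b.sum_one

namespace POMDP

variable {S A O : Type*} [Fintype S] [Fintype A] [Fintype O] [Nonempty S] [Nonempty A]
  [Nonempty O] (M : POMDP S A O)

lemma prO_nonneg (s : S) (a : A) (o : O) : 0 ≤ M.prO s a o :=
  Finset.sum_nonneg fun s' _ => M.prSO_nonneg s a s' o

lemma bprO_nonneg (b : Belief S) (a : A) (o : O) : 0 ≤ M.bprO b a o :=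
  Finset.sum_nonneg fun s' _ => M.bprSO_nonneg b a s' o

lemma prSO_eq_zero_of_prO_eq_zero {s : S} {a : A} {o : O} (h : M.prO s a o = 0) :
    (M.prSO s a · o) = 0 :=
  (Fintype.sum_eq_zero_iff_of_nonneg fun s' => M.prSO_nonneg s a s' o).1 h

lemma bprSO_eq_zero_of_bprO_eq_zero {b : Belief S} {a : A} {o : O} (h : M.bprO b a o = 0) :
    (M.bprSO b a · o) = 0 :=
  (Fintype.sum_eq_zero_iff_of_nonneg fun s' => M.bprSO_nonneg b a s' o).1 h

lemma bprSO_eq_sum_smul (b : Belief S) (a : A) (o : O) :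
    (M.bprSO b a · o) = ∑ s, b.val s • (M.prSO s a · o) := by
  ext s'
  simp [bprSO]

lemma post_val (b : Belief S) (a : A) (o : O) (h : 0 < M.bprO b a o) :
    (M.post b a o h).val = (M.bprO b a o)⁻¹ • (M.bprSO b a · o) := by
  ext s'
  simp [post, div_eq_inv_mul]

lemma expR_mix (b₁ b₂ : Belief S) (l : ℝ) (h0 : 0 ≤ l) (h1 : l ≤ 1) (a : A) :
    M.expR (b₁.mix b₂ l h0 h1) a = l * M.expR b₁ a + (1 - l) * M.expR b₂ a := by
  simp only [expR, Belief.mix, add_mul, Finset.sum_add_distrib, Finset.mul_sum, mul_assoc]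

lemma bprSO_mix (b₁ b₂ : Belief S) (l : ℝ) (h0 : 0 ≤ l) (h1 : l ≤ 1) (a : A) (o : O) :
    (M.bprSO (b₁.mix b₂ l h0 h1) a · o) =
      l • (M.bprSO b₁ a · o) + (1 - l) • (M.bprSO b₂ a · o) := by
  ext s'
  simp only [bprSO, Belief.mix, Pi.add_apply, Pi.smul_apply, smul_eq_mul, add_mul,
    Finset.sum_add_distrib, Finset.mul_sum, mul_assoc]

lemma isWeight_iff_mem_weightCone (b₀ tgt : Belief S) (w : M.OSIdx → ℝ) :
    M.IsWeight b₀ tgt w ↔ w ∈ weightCone (fun i => (M.member b₀ i).val) tgt.val := by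
  simp only [IsWeight, weightCone, Set.mem_ofPred_eq, Pi.le_def, Pi.zero_apply, funext_iff,
    Finset.sum_apply, Pi.smul_apply, smul_eq_mul]

lemma weightCone_bprSO_nonempty (b₀ b : Belief S) (a : A) (o : O) :
    (weightCone (fun i => (M.member b₀ i).val) (M.bprSO b a · o)).Nonempty := by
  -- the canonical weights `w_{b,a,o}`, scaled by `Pr(o|b,a)`
  let w : M.OSIdx → ℝ := fun i =>
    i.elim 0 fun x => if x.1.2 = (a, o) then b.val x.1.1 * M.prO x.1.1 a o else 0
  let g : S × A × O → S → ℝ := fun x =>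
    if x.2 = (a, o) then b.val x.1 • (M.prSO x.1 a · o) else 0
  have hsome : ∀ x, w (some x) • (M.member b₀ (some x)).val = g x.1 := by
    rintro ⟨⟨s, a', o'⟩, hx⟩
    by_cases hao : (a', o') = (a, o)
    · obtain ⟨rfl, rfl⟩ := Prod.ext_iff.1 hao
      ext s'
      simp [w, g, member, osb, hx.ne', mul_assoc, mul_div_cancel₀]
    · simp [w, g, hao]
  have hnull : ∀ x : {x : S × A × O // ¬0 < M.prO x.1 x.2.1 x.2.2}, g x = 0 := by
    rintro ⟨⟨s, a', o'⟩, hx⟩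
    by_cases hao : (a', o') = (a, o)
    · obtain ⟨rfl, rfl⟩ := Prod.ext_iff.1 hao
      simp [g, M.prSO_eq_zero_of_prO_eq_zero ((not_lt.1 hx).antisymm (M.prO_nonneg s a' o'))]
    · simp [g, hao]
  refine ⟨w, ?_, ?_⟩
  · rintro (_ | ⟨⟨s, a', o'⟩, _⟩)
    · exact le_rfl
    · dsimp only [w, Option.elim]
      split_ifs
      exacts [mul_nonneg (b.nonneg s) (M.prO_nonneg s a o), le_rfl]
  · calc ∑ i, w i • (M.member b₀ i).val
        = ∑ x : {x : S × A × O // 0 < M.prO x.1 x.2.1 x.2.2}, g x := by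
          rw [Fintype.sum_option, Finset.sum_congr rfl fun x _ => hsome x,
            show w none = 0 from rfl, zero_smul, zero_add]
      _ = ∑ x, g x := by
          rw [← Fintype.sum_subtype_add_sum_subtype (fun x => 0 < M.prO x.1 x.2.1 x.2.2) g,
            Fintype.sum_eq_zero _ hnull, add_zero]
      _ = (M.bprSO b a · o) := by
          simp [g, M.bprSO_eq_sum_smul, Fintype.sum_prod_type]

lemma bprO_mul_iInf_isWeight (b₀ b : Belief S) (a : A) (o : O) (h : 0 < M.bprO b a o)
    (q : M.OSIdx → ℝ) :
    M.bprO b a o * ⨅ w : {w : M.OSIdx → ℝ // M.IsWeight b₀ (M.post b a o h) w},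
      ∑ i, (w : M.OSIdx → ℝ) i * q i =
    minCost (fun i => (M.member b₀ i).val) q (M.bprSO b a · o) := by
  rw [← mul_minCost_inv_smul h, ← M.post_val b a o h]
  congr 1
  exact Equiv.iInf_congr (Equiv.subtypeEquivRight (M.isWeight_iff_mem_weightCone b₀ _)) fun _ => rfl

lemma HOTIB_eq_sup'_minCost (b₀ : Belief S) (Q : Belief S → A → ℝ) (b : Belief S) (a : A) :
    M.HOTIB b₀ Q b a = M.expR b a + M.γ * ∑ o, Finset.univ.sup' Finset.univ_nonempty fun a' =>
      minCost (fun i => (M.member b₀ i).val) (fun i => Q (M.member b₀ i) a') (M.bprSO b a · o) := by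
  refine congrArg (M.expR b a + M.γ * ·) (Finset.sum_congr rfl fun o _ => ?_)
  split_ifs with h
  · simp only [M.bprO_mul_iInf_isWeight]
  · rw [M.bprSO_eq_zero_of_bprO_eq_zero ((not_lt.1 h).antisymm (M.bprO_nonneg b a o))]
    simp only [minCost_zero _ fun i => (M.member b₀ i).sum_proj_val, Finset.sup'_const]

end POMDP

/-- For any `Q`, `H_OTIB Q` is convex in the belief; consequently any fixed point of
`H_OTIB` is convex in the belief. -/
theorem HOTIB_convex {S A O : Type*} [Fintype S] [Fintype A] [Fintype O]
    [Nonempty S] [Nonempty A] [Nonempty O] (M : POMDP S A O) (b₀ : Belief S) :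
    (∀ Q : Belief S → A → ℝ, ConvexInBelief (fun b a => M.HOTIB b₀ Q b a)) ∧
    (∀ Q : Belief S → A → ℝ, (∀ b a, Q b a = M.HOTIB b₀ Q b a) → ConvexInBelief Q) := by
  have hconvex : ∀ Q : Belief S → A → ℝ, ConvexInBelief (fun b a => M.HOTIB b₀ Q b a) := by
    intro Q a b₁ b₂ l h0 h1
    have hobs : ConvexOn ℝ {x | (weightCone (fun i => (M.member b₀ i).val) x).Nonempty}
        fun x => Finset.univ.sup' Finset.univ_nonempty fun a' =>
          minCost (fun i => (M.member b₀ i).val) (fun i => Q (M.member b₀ i) a') x :=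
      ConvexOn.finset_sup' _ fun a' _ =>
        convexOn_minCost _ fun i => (M.member b₀ i).sum_proj_val
    have hsum := Finset.sum_le_sum fun o (_ : o ∈ Finset.univ) =>
      hobs.2 (M.weightCone_bprSO_nonempty b₀ b₁ a o) (M.weightCone_bprSO_nonempty b₀ b₂ a o)
        h0 (sub_nonneg.2 h1) (add_sub_cancel l 1)
    simp only [smul_eq_mul, Finset.sum_add_distrib, ← Finset.mul_sum] at hsum
    simp only [M.HOTIB_eq_sup'_minCost, M.expR_mix, M.bprSO_mix]
    linarith [mul_le_mul_of_nonneg_left hsum M.γ_pos.le]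
  refine ⟨hconvex, fun Q hQ => ?_⟩
  convert hconvex Q using 1
  exact funext₂ hQ
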